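/- If f : (0,∞) → ℝ is measurable, locally integrable, and f(t) = A t^{ν} + o(t^{ν}) as t → ∞ with ν > -1, and f is bounded near 0, then L(f)(p) = A Γ(ν+1) p^{-ν-1} + o(p^{-ν-1}) as p → 0⁺. -/

import Mathlib

/-!
Write `f t = A t^ν + g t` with `g = o(t^ν)`. The transform of `t^ν` is exactly
`Γ(ν+1) p^(-ν-1)`. For `g`, given `ε` choose `T` with `|g t| ≤ ε t^ν` for `t ≥ T`: the part of
`L(g)(p)` over `(0, T]` is bounded by `∫₀^T |g|` uniformly in `p`, and the tail by
`ε Γ(ν+1) p^(-ν-1)`. Since `p^(-ν-1) → ∞` as `p → 0⁺`, the constant is eventually absorbed.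
-/

open MeasureTheory Set Filter Asymptotics Topology Real

noncomputable def laplaceTransform (f : ℝ → ℝ) (p : ℝ) : ℝ :=
  ∫ t in Ioi 0, exp (-p * t) * f t

theorem Asymptotics.isLittleO_of_forall_norm_le_const_add_mul {α E F : Type*} [Norm E]
    [Norm F] {l : Filter α} {u : α → E} {v : α → F}
    (hv : Tendsto (fun x => ‖v x‖) l atTop)
    (h : ∀ ε > 0, ∃ C, ∀ᶠ x in l, ‖u x‖ ≤ C + ε * ‖v x‖) : u =o[l] v := by
  refine isLittleO_iff.2 fun ε hε => ?_
  obtain ⟨C, hC⟩ := h (ε / 2) (half_pos hε)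
  filter_upwards [hC, hv.eventually_ge_atTop (2 * C / ε)] with x hux hvx
  have : C ≤ ε / 2 * ‖v x‖ := by
    rw [div_le_iff₀ hε] at hvx
    linarith
  linarith

theorem locallyIntegrableOn_Ici_of_forall_integrableOn_Ioc {E : Type*}
    [NormedAddCommGroup E] {f : ℝ → E} {a : ℝ} (h : ∀ b, IntegrableOn f (Ioc a b)) :
    LocallyIntegrableOn f (Ici a) := by
  rw [locallyIntegrableOn_iff isClosed_Ici.isLocallyClosed]
  intro k hk hkc
  obtain ⟨b, hb⟩ := hkc.bddAbove
  have hab : IntegrableOn f (Icc a b) := by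
    rw [integrableOn_Icc_iff_integrableOn_Ioc]
    exact h b
  exact hab.mono_set fun x hx => ⟨hk hx, hb hx⟩

theorem MeasureTheory.LocallyIntegrableOn.integrableOn_Ioc_of_norm_le {E : Type*}
    [NormedAddCommGroup E] {f : ℝ → E} {a c M : ℝ} (hf : LocallyIntegrableOn f (Ioi a))
    (hac : a < c) (hM : ∀ t ∈ Ioc a c, ‖f t‖ ≤ M) (b : ℝ) : IntegrableOn f (Ioc a b) := by
  have hnear : IntegrableOn f (Ioc a c) := by
    refine Integrable.mono' (integrable_const M)
      (hf.aestronglyMeasurable.mono_set Ioc_subset_Ioi_self) ?_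
    exact (ae_restrict_iff' measurableSet_Ioc).2 (ae_of_all _ hM)
  have hfar : IntegrableOn f (Icc c (max c b)) :=
    hf.integrableOn_compact_subset (fun t ht => hac.trans_le ht.1) isCompact_Icc
  refine (hnear.union hfar).mono_set fun t ht => ?_
  rcases le_or_gt t c with htc | htc
  · exact Or.inl ⟨ht.1, htc⟩
  · exact Or.inr ⟨htc.le, ht.2.trans (le_max_right _ _)⟩

theorem integrableOn_exp_neg_mul_mul_rpow {p ν : ℝ} (hp : 0 < p) (hν : -1 < ν) :
    IntegrableOn (fun t => exp (-p * t) * t ^ ν) (Ioi 0) := by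
  simpa [mul_comm] using integrableOn_rpow_mul_exp_neg_mul_rpow hν one_pos hp

theorem laplaceTransform_rpow {p ν : ℝ} (hp : 0 < p) (hν : -1 < ν) :
    laplaceTransform (fun t => t ^ ν) p = Gamma (ν + 1) * p ^ (-ν - 1) := by
  have := integral_rpow_mul_exp_neg_mul_rpow one_pos hν hp
  simp only [rpow_one, div_one, mul_one] at this
  simp_rw [laplaceTransform, mul_comm (exp _)]
  rw [this, mul_comm, neg_add']

theorem integrableOn_exp_neg_mul_of_isBigO_rpow {g : ℝ → ℝ} {p ν : ℝ} (hp : 0 < p)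
    (hν : -1 < ν) (hg : LocallyIntegrableOn g (Ici 0)) (hO : g =O[atTop] fun t => t ^ ν) :
    IntegrableOn (fun t => exp (-p * t) * g t) (Ioi 0) :=
  ((hg.continuousOn_mul (by fun_prop) isClosed_Ici.isLocallyClosed).integrableOn_of_isBigO_atTop
    ((isBigO_refl _ _).mul hO)
    ⟨Ioi 0, Ioi_mem_atTop 0, integrableOn_exp_neg_mul_mul_rpow hp hν⟩).mono_set
    Ioi_subset_Ici_self

theorem norm_setIntegral_Ioc_exp_neg_mul_le {g : ℝ → ℝ} {p T : ℝ} (hp : 0 ≤ p)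
    (hg : IntegrableOn g (Ioc 0 T)) :
    ‖∫ t in Ioc 0 T, exp (-p * t) * g t‖ ≤ ∫ t in Ioc 0 T, ‖g t‖ := by
  refine norm_integral_le_of_norm_le hg.norm ((ae_restrict_iff' measurableSet_Ioc).2 ?_)
  refine ae_of_all _ fun t ht => ?_
  have hexp : exp (-p * t) ≤ 1 := exp_le_one_iff.2 (by nlinarith [ht.1])
  rw [norm_mul, norm_of_nonneg (exp_pos _).le]
  exact mul_le_of_le_one_left (norm_nonneg _) hexp

theorem norm_setIntegral_Ioi_exp_neg_mul_le {g : ℝ → ℝ} {p ν T c : ℝ} (hp : 0 < p)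
    (hν : -1 < ν) (hT : 0 ≤ T) (hg : ∀ t, T ≤ t → ‖g t‖ ≤ c * t ^ ν) :
    ‖∫ t in Ioi T, exp (-p * t) * g t‖ ≤ c * (Gamma (ν + 1) * p ^ (-ν - 1)) := by
  have hc : 0 ≤ c := nonneg_of_mul_nonneg_left
    ((norm_nonneg _).trans (hg (T + 1) (by linarith))) (rpow_pos_of_pos (by linarith) ν)
  have hint := integrableOn_exp_neg_mul_mul_rpow hp hν
  calc ‖∫ t in Ioi T, exp (-p * t) * g t‖
      ≤ ∫ t in Ioi T, c * (exp (-p * t) * t ^ ν) := by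
        refine norm_integral_le_of_norm_le ((hint.mono_set (Ioi_subset_Ioi hT)).const_mul c)
          ((ae_restrict_iff' measurableSet_Ioi).2 (ae_of_all _ fun t ht => ?_))
        rw [norm_mul, norm_of_nonneg (exp_pos _).le, mul_left_comm]
        exact mul_le_mul_of_nonneg_left (hg t ht.le) (exp_pos _).le
    _ ≤ c * laplaceTransform (fun t => t ^ ν) p := by
        rw [integral_const_mul]
        refine mul_le_mul_of_nonneg_left (setIntegral_mono_set hint ?_
          (Ioi_subset_Ioi hT).eventuallyLE) hc
        exact (ae_restrict_iff' measurableSet_Ioi).2 (ae_of_all _ fun t ht =>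
          mul_nonneg (exp_pos _).le (rpow_nonneg (le_of_lt ht) _))
    _ = c * (Gamma (ν + 1) * p ^ (-ν - 1)) := by rw [laplaceTransform_rpow hp hν]

theorem laplaceTransform_isLittleO_of_isLittleO_rpow {g : ℝ → ℝ} {ν : ℝ} (hν : -1 < ν)
    (hg : LocallyIntegrableOn g (Ici 0)) (ho : g =o[atTop] fun t => t ^ ν) :
    laplaceTransform g =o[𝓝[>] 0] fun p => p ^ (-ν - 1) := by
  refine isLittleO_of_forall_norm_le_const_add_mul (tendsto_norm_atTop_atTop.comp
    (tendsto_rpow_neg_nhdsGT_zero (by linarith))) fun ε hε => ?_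
  have hΓ : 0 < Gamma (ν + 1) := Gamma_pos_of_pos (by linarith)
  obtain ⟨T, hT0, hT⟩ : ∃ T, 0 ≤ T ∧ ∀ t, T ≤ t → ‖g t‖ ≤ ε / Gamma (ν + 1) * t ^ ν := by
    obtain ⟨N, hN⟩ := eventually_atTop.1
      ((ho.def (div_pos hε hΓ)).and (eventually_ge_atTop (0 : ℝ)))
    refine ⟨max N 0, le_max_right _ _, fun t ht => ?_⟩
    obtain ⟨hgt, ht0⟩ := hN t ((le_max_left _ _).trans ht)
    rwa [norm_of_nonneg (rpow_nonneg ht0 ν)] at hgt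
  have hgT : IntegrableOn g (Ioc 0 T) :=
    (hg.integrableOn_compact_subset Icc_subset_Ici_self isCompact_Icc).mono_set
      Ioc_subset_Icc_self
  refine ⟨∫ t in Ioc 0 T, ‖g t‖, ?_⟩
  filter_upwards [self_mem_nhdsWithin] with p (hp : 0 < p)
  have hint := integrableOn_exp_neg_mul_of_isBigO_rpow hp hν hg ho.isBigO
  rw [laplaceTransform, ← Ioc_union_Ioi_eq_Ioi hT0,
    setIntegral_union (Ioc_disjoint_Ioi le_rfl) measurableSet_Ioi
      (hint.mono_set Ioc_subset_Ioi_self) (hint.mono_set (Ioi_subset_Ioi hT0)),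
    norm_of_nonneg (rpow_nonneg hp.le _)]
  calc _ ≤ _ := norm_add_le _ _
    _ ≤ (∫ t in Ioc 0 T, ‖g t‖) + ε / Gamma (ν + 1) * (Gamma (ν + 1) * p ^ (-ν - 1)) :=
        add_le_add (norm_setIntegral_Ioc_exp_neg_mul_le hp.le hgT)
          (norm_setIntegral_Ioi_exp_neg_mul_le hp hν hT0 hT)
    _ = _ := by field_simp

theorem abelian_laplace_at_zero_general (f : ℝ → ℝ)
    (hloc : LocallyIntegrableOn f (Ioi 0))
    (hbdd : ∃ M, ∀ t ∈ Ioc (0 : ℝ) 1, |f t| ≤ M)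
    (A ν : ℝ) (hν : -1 < ν)
    (hasymp : (fun t => f t - A * t ^ ν) =o[atTop] fun t => t ^ ν) :
    (fun p => (∫ t in Ioi (0 : ℝ), Real.exp (-p * t) * f t)
        - A * Real.Gamma (ν + 1) * p ^ (-ν - 1))
      =o[nhdsWithin 0 (Ioi 0)] fun p => p ^ (-ν - 1) := by
  obtain ⟨M, hM⟩ := hbdd
  have hfI : ∀ b, IntegrableOn f (Ioc 0 b) :=
    hloc.integrableOn_Ioc_of_norm_le one_pos (by simpa only [Real.norm_eq_abs] using hM)
  have hrpowI : ∀ b, IntegrableOn (fun t : ℝ => t ^ ν) (Ioc 0 b) := fun _ =>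
    (intervalIntegral.intervalIntegrable_rpow' hν).1
  have hg : LocallyIntegrableOn (fun t => f t - A * t ^ ν) (Ici 0) :=
    locallyIntegrableOn_Ici_of_forall_integrableOn_Ioc fun b =>
      (hfI b).sub ((hrpowI b).const_mul A)
  have hfO : f =O[atTop] fun t => t ^ ν :=
    (hasymp.isBigO.add ((isBigO_refl _ _).const_mul_left A)).congr_left fun _ => sub_add_cancel _ _
  refine (laplaceTransform_isLittleO_of_isLittleO_rpow hν hg hasymp).congr' ?_ EventuallyEq.rfl
  filter_upwards [self_mem_nhdsWithin] with p (hp : 0 < p)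
  rw [mul_assoc, ← laplaceTransform_rpow hp hν, laplaceTransform, laplaceTransform,
    ← integral_const_mul, ← integral_sub (integrableOn_exp_neg_mul_of_isBigO_rpow hp hν
      (locallyIntegrableOn_Ici_of_forall_integrableOn_Ioc hfI) hfO)
      ((integrableOn_exp_neg_mul_mul_rpow hp hν).const_mul A)]
  refine setIntegral_congr_fun measurableSet_Ioi fun t _ => ?_
  ring

theorem abelian_laplace_at_zero (f : ℝ → ℝ) (hf : Measurable f)
    (hloc : LocallyIntegrableOn f (Ioi 0))
    (hbdd : ∃ M, ∀ t ∈ Ioc (0 : ℝ) 1, |f t| ≤ M)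
    (A ν : ℝ) (hν : -1 < ν)
    (hasymp : (fun t => f t - A * t ^ ν) =o[atTop] fun t => t ^ ν) :
    (fun p => (∫ t in Ioi (0 : ℝ), Real.exp (-p * t) * f t)
        - A * Real.Gamma (ν + 1) * p ^ (-ν - 1))
      =o[nhdsWithin 0 (Ioi 0)] fun p => p ^ (-ν - 1) :=
  abelian_laplace_at_zero_general f hloc hbdd A ν hν hasymp
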